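/- Fix integers n > 1 and d ≥ n, and define F : ℝ^d → {±1} by F(x) = sgn(−1 + Σ_{i=1}^n max(0, x_i)), where x_i denotes the i-th coordinate of x. Then F cannot be computed by any two-layer threshold network with at most 2^n − 2 hidden units: there do NOT exist m ≤ 2^n − 2, weight vectors v_j ∈ ℝ^d, biases d_j ∈ ℝ, output weights w_j ∈ ℝ (j = 1,…,m) and an output bias w_0' ∈ ℝ such that F(x) = sgn(w_0' + Σ_{j=1}^m w_j sgn(v_j · x + d_j)) for all x ∈ ℝ^d. -/

import Mathlib

noncomputable def sgn (x : ℝ) : ℝ := if 0 ≤ x then 1 else -1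

/-!
Fix a nonempty `S ⊆ {1, …, n}` and look at the face of the hyperplane `∑_{i ∈ S} x_i = 1` on which
`x_i > 0` for `i ∈ S` and `x_i < 0` for the other `i ≤ n`. Moving off such a point along `𝟙_S`
flips `F`, so a threshold network computing `F` has, through every point of the face, the
hyperplane of some hidden unit. The face is a relatively open piece of its hyperplane, and a
hyperplane different from it meets it in a null set, so some hidden unit has exactly the
hyperplane `∑_{i ∈ S} x_i = 1`. Different `S` give different hyperplanes, so there are at least
`2^n - 1` hidden units.
-/

open Filter Topology MeasureTheory Finset

lemma sgn_of_nonneg {x : ℝ} (h : 0 ≤ x) : sgn x = 1 := if_pos h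

lemma sgn_of_neg {x : ℝ} (h : x < 0) : sgn x = -1 := if_neg h.not_ge

lemma eventually_sgn_comp_eq {X : Type*} [TopologicalSpace X] {g : X → ℝ} {p : X}
    (hg : ContinuousAt g p) (hp : g p ≠ 0) : ∀ᶠ x in 𝓝 p, sgn (g x) = sgn (g p) := by
  rcases hp.lt_or_gt with hneg | hpos
  · filter_upwards [hg.eventually (gt_mem_nhds hneg)] with x hx
    rw [sgn_of_neg hx, sgn_of_neg hneg]
  · filter_upwards [hg.eventually (lt_mem_nhds hpos)] with x hx
    rw [sgn_of_nonneg hx.le, sgn_of_nonneg hpos.le]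

section

variable {ι : Type*} [Fintype ι]

lemma volume_setOf_dotProduct_add_eq_zero {a : ι → ℝ} (ha : a ≠ 0) (β : ℝ) :
    volume {y : ι → ℝ | a ⬝ᵥ y + β = 0} = 0 := by
  let s : AffineSubspace ℝ (ι → ℝ) :=
    { carrier := {y | a ⬝ᵥ y + β = 0}
      smul_vsub_vadd_mem' := fun c p₁ p₂ p₃ (h₁ : a ⬝ᵥ p₁ + β = 0) (h₂ : a ⬝ᵥ p₂ + β = 0)
          (h₃ : a ⬝ᵥ p₃ + β = 0) => by
        show a ⬝ᵥ (c • (p₁ - p₂) + p₃) + β = 0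
        rw [dotProduct_add, dotProduct_smul, dotProduct_sub, smul_eq_mul]
        linear_combination c * h₁ - c * h₂ + h₃ }
  have hs : s ≠ ⊤ := by
    intro htop
    have h0 : a ⬝ᵥ 0 + β = 0 := (htop ▸ AffineSubspace.mem_top ℝ _ 0 : (0 : ι → ℝ) ∈ s)
    have ha' : a ⬝ᵥ a + β = 0 := (htop ▸ AffineSubspace.mem_top ℝ _ a : a ∈ s)
    rw [dotProduct_zero, zero_add] at h0
    rw [h0, add_zero, dotProduct_self_eq_zero] at ha'
    exact ha ha'
  exact Measure.addHaar_affineSubspace volume s hs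

lemma eq_zero_of_volume_setOf_dotProduct_add_ne_zero {a : ι → ℝ} {β : ℝ}
    (h : volume {y : ι → ℝ | a ⬝ᵥ y + β = 0} ≠ 0) : a = 0 ∧ β = 0 := by
  by_cases ha : a = 0
  · subst ha
    refine ⟨rfl, ?_⟩
    by_contra hβ
    simp [hβ] at h
  · exact absurd (volume_setOf_dotProduct_add_eq_zero ha β) h

end

section

variable {ι : Type*} [DecidableEq ι]

def indicatorVec (S : Finset ι) : ι → ℝ := fun i => if i ∈ S then 1 else 0

lemma indicatorVec_injective : Function.Injective (indicatorVec (ι := ι)) := by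
  intro S T h
  ext i
  have hi := congrFun h i
  simp only [indicatorVec] at hi
  split_ifs at hi <;> simp_all

def orthant (A S : Finset ι) : Set (ι → ℝ) := {p | (∀ i ∈ S, 0 < p i) ∧ ∀ i ∈ A \ S, p i < 0}

def face (A S : Finset ι) : Set (ι → ℝ) := orthant A S ∩ {p | ∑ i ∈ S, p i = 1}

noncomputable def reluThreshold (A : Finset ι) (x : ι → ℝ) : ℝ := sgn (-1 + ∑ i ∈ A, max 0 (x i))

/-- Retraction onto the hyperplane `∑ i ∈ S, y i = 1` along `indicatorVec S`; pulling the face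
back through it gives an open set of positive volume in the whole space. -/
noncomputable def faceProj (S : Finset ι) (y : ι → ℝ) : ι → ℝ :=
  y + ((1 - ∑ i ∈ S, y i) / #S) • indicatorVec S

variable {A S : Finset ι} {p : ι → ℝ}

lemma isOpen_orthant : IsOpen (orthant A S) := by
  simp only [orthant, Set.ofPred_and, Set.ofPred_forall]
  exact (isOpen_biInter_finset fun i _ => isOpen_lt continuous_const (continuous_apply i)).inter
    (isOpen_biInter_finset fun i _ => isOpen_lt (continuous_apply i) continuous_const)

lemma sum_max_zero_eq_of_mem_orthant (hSA : S ⊆ A) (hp : p ∈ orthant A S) :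
    ∑ i ∈ A, max 0 (p i) = ∑ i ∈ S, p i := by
  rw [← sum_subset hSA fun i hiA hiS => max_eq_left (hp.2 i (mem_sdiff.2 ⟨hiA, hiS⟩)).le]
  exact sum_congr rfl fun i hi => max_eq_right (hp.1 i hi).le

lemma face_nonempty (hS : S.Nonempty) : (face A S).Nonempty := by
  refine ⟨(#S : ℝ)⁻¹ • indicatorVec S - indicatorVec (A \ S), ⟨fun i hi => ?_, fun i hi => ?_⟩, ?_⟩
  · simp [indicatorVec, hi, hS]
  · simp [indicatorVec, hi, (mem_sdiff.1 hi).2]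
  · have : (#S : ℝ) ≠ 0 := by exact_mod_cast hS.card_pos.ne'
    show ∑ i ∈ S, _ = 1
    rw [sum_congr rfl fun i hi => (by simp [indicatorVec, hi] : _ = (#S : ℝ)⁻¹), sum_const,
      nsmul_eq_mul, mul_inv_cancel₀ this]

lemma continuous_faceProj (S : Finset ι) : Continuous (faceProj S) := by
  unfold faceProj
  fun_prop

lemma sum_faceProj (hS : S.Nonempty) (y : ι → ℝ) : ∑ i ∈ S, faceProj S y i = 1 := by
  have : (#S : ℝ) ≠ 0 := by exact_mod_cast hS.card_pos.ne'
  simp only [faceProj, Pi.add_apply, Pi.smul_apply, indicatorVec, smul_eq_mul, mul_ite, mul_one,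
    mul_zero, sum_add_distrib, sum_ite_mem, inter_self, sum_const, nsmul_eq_mul]
  field_simp
  ring

lemma faceProj_of_sum_eq_one {y : ι → ℝ} (hy : ∑ i ∈ S, y i = 1) : faceProj S y = y := by
  simp [faceProj, hy]

lemma not_eventually_reluThreshold_eq (hS : S.Nonempty) (hSA : S ⊆ A) (hp : p ∈ face A S) :
    ¬ ∀ᶠ x in 𝓝 p, reluThreshold A x = reluThreshold A p := by
  intro hconst
  have hline : Tendsto (fun t : ℝ => p - t • indicatorVec S) (𝓝[>] 0) (𝓝 p) := by
    have : Continuous fun t : ℝ => p - t • indicatorVec S := by fun_prop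
    simpa using (this.tendsto 0).mono_left nhdsWithin_le_nhds
  have hsmall : ∀ᶠ t in 𝓝[>] (0 : ℝ), ∀ i ∈ S, t < p i :=
    (eventually_all_finset S).2 fun i hi => nhdsWithin_le_nhds (eventually_lt_nhds (hp.1.1 i hi))
  obtain ⟨t, htp, hts, ht0⟩ :=
    ((hline.eventually hconst).and (hsmall.and self_mem_nhdsWithin)).exists
  have hmem : p - t • indicatorVec S ∈ orthant A S :=
    ⟨fun i hi => by
      simp only [Pi.sub_apply, Pi.smul_apply, indicatorVec, hi, if_true, smul_eq_mul, mul_one]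
      linarith [hts i hi],
      fun i hi => by simpa [indicatorVec, (mem_sdiff.1 hi).2] using hp.1.2 i hi⟩
  have hpos : reluThreshold A p = 1 := by
    rw [reluThreshold, sum_max_zero_eq_of_mem_orthant hSA hp.1, hp.2]
    exact sgn_of_nonneg (by norm_num)
  have hneg : reluThreshold A (p - t • indicatorVec S) = -1 := by
    rw [reluThreshold, sum_max_zero_eq_of_mem_orthant hSA hmem]
    apply sgn_of_neg
    have hsum : ∑ i ∈ S, p i = 1 := hp.2
    have hcard : (0 : ℝ) < #S := by exact_mod_cast hS.card_pos
    rw [sum_congr rfl fun i hi => (by simp [indicatorVec, hi] : (p - t • indicatorVec S) i = p i - t),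
      sum_sub_distrib, hsum, sum_const, nsmul_eq_mul]
    nlinarith
  rw [hneg, hpos] at htp
  norm_num at htp

end

section

variable {ι κ : Type*} [Fintype ι] [Fintype κ]

noncomputable def thresholdNet (v : κ → ι → ℝ) (b w : κ → ℝ) (w₀ : ℝ) (x : ι → ℝ) : ℝ :=
  sgn (w₀ + ∑ j, w j * sgn (v j ⬝ᵥ x + b j))

variable {p : ι → ℝ} {v : κ → ι → ℝ} {b w : κ → ℝ} {w₀ : ℝ}

lemma eventually_thresholdNet_eq (hp : ∀ j, v j ≠ 0 → v j ⬝ᵥ p + b j ≠ 0) :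
    ∀ᶠ x in 𝓝 p, thresholdNet v b w w₀ x = thresholdNet v b w w₀ p := by
  have hunit : ∀ j, ∀ᶠ x in 𝓝 p, sgn (v j ⬝ᵥ x + b j) = sgn (v j ⬝ᵥ p + b j) := by
    intro j
    by_cases hj : v j = 0
    · simp [hj]
    · exact eventually_sgn_comp_eq (by fun_prop) (hp j hj)
  filter_upwards [eventually_all.2 hunit] with x hx
  simp only [thresholdNet, hx]

variable [DecidableEq ι] {A S : Finset ι}

lemma dotProduct_indicatorVec (x : ι → ℝ) (S : Finset ι) :
    x ⬝ᵥ indicatorVec S = ∑ i ∈ S, x i := by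
  simp [dotProduct, indicatorVec]

lemma dotProduct_faceProj_add (a y : ι → ℝ) (β : ℝ) :
    a ⬝ᵥ faceProj S y + β = (a - (a ⬝ᵥ indicatorVec S / #S) • indicatorVec S) ⬝ᵥ y
      + (a ⬝ᵥ indicatorVec S / #S + β) := by
  simp only [faceProj, dotProduct_add, dotProduct_smul, sub_dotProduct, smul_dotProduct,
    smul_eq_mul, dotProduct_comm (indicatorVec S) y, dotProduct_indicatorVec]
  ring

lemma exists_unit_vanishing_of_mem_face (hnet : reluThreshold A = thresholdNet v b w w₀)
    (hS : S.Nonempty) (hSA : S ⊆ A) (hp : p ∈ face A S) : ∃ j, v j ≠ 0 ∧ v j ⬝ᵥ p + b j = 0 := by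
  by_contra! h
  exact not_eventually_reluThreshold_eq hS hSA hp (hnet ▸ eventually_thresholdNet_eq h)

lemma exists_unit_eq_smul_indicatorVec (hnet : reluThreshold A = thresholdNet v b w w₀)
    (hS : S.Nonempty) (hSA : S ⊆ A) :
    ∃ j c, c ≠ 0 ∧ v j = c • indicatorVec S ∧ b j = -c := by
  have hU : volume (faceProj S ⁻¹' orthant A S) ≠ 0 := by
    obtain ⟨p, hp⟩ := face_nonempty (A := A) hS
    refine ((isOpen_orthant.preimage (continuous_faceProj S)).measure_pos volume ⟨p, ?_⟩).ne'
    rw [Set.mem_preimage, faceProj_of_sum_eq_one hp.2]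
    exact hp.1
  have hcover : faceProj S ⁻¹' orthant A S ⊆
      ⋃ j, {y | v j ≠ 0 ∧ v j ⬝ᵥ faceProj S y + b j = 0} := fun y hy =>
    Set.mem_iUnion.2 (exists_unit_vanishing_of_mem_face hnet hS hSA ⟨hy, sum_faceProj hS y⟩)
  obtain ⟨j, hj⟩ : ∃ j, volume {y | v j ≠ 0 ∧ v j ⬝ᵥ faceProj S y + b j = 0} ≠ 0 := by
    by_contra! h
    exact hU (measure_mono_null hcover (measure_iUnion_null h))
  have hvj : v j ≠ 0 := by
    rintro h0
    simp [h0] at hj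
  set c := v j ⬝ᵥ indicatorVec S / #S
  obtain ⟨hv, hb⟩ := eq_zero_of_volume_setOf_dotProduct_add_ne_zero
    (a := v j - c • indicatorVec S) (β := c + b j) (by simpa [hvj, dotProduct_faceProj_add] using hj)
  refine ⟨j, c, ?_, sub_eq_zero.1 hv, by linarith⟩
  rintro hc
  rw [hc, zero_smul, sub_zero] at hv
  exact hvj hv

theorem two_pow_card_sub_one_le_card (hnet : reluThreshold A = thresholdNet v b w w₀) :
    2 ^ #A - 1 ≤ Fintype.card κ := by
  choose unit c hc hv hb using fun S : A.powerset.erase ∅ =>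
    exists_unit_eq_smul_indicatorVec hnet (nonempty_iff_ne_empty.2 (mem_erase.1 S.2).1)
      (mem_powerset.1 (mem_erase.1 S.2).2)
  have hinj : Function.Injective unit := by
    intro S T h
    have hcST : c S = c T := by linarith [hb S, hb T, congrArg b h]
    apply Subtype.ext
    apply indicatorVec_injective
    apply smul_right_injective _ (hc S)
    dsimp only
    rw [← hv S, h, hv T, hcST]
  calc 2 ^ #A - 1 = #(A.powerset.erase ∅) := by
        rw [card_erase_of_mem (empty_mem_powerset A), card_powerset]
    _ = Fintype.card (A.powerset.erase ∅) := (Fintype.card_coe _).symm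
    _ ≤ Fintype.card κ := Fintype.card_le_of_injective unit hinj

end

/-- the rectifier network `x ↦ sgn(-1 + Σ_{i=1}^n max(0, x_i))` on
`ℝ^d` (with `n > 1`, `d ≥ n`) cannot be computed by any two-layer threshold
network with at most `2^n - 2` hidden units. -/
theorem relu_needs_exponential_thresholds
    (n d : ℕ) (hn : 1 < n) (hd : n ≤ d)
    (F : (Fin d → ℝ) → ℝ)
    (hF : ∀ x, F x = sgn (-1 + ∑ i : Fin n, max 0 (x (Fin.castLE hd i)))) :
    ¬ ∃ m ≤ 2 ^ n - 2, ∃ (v : Fin m → Fin d → ℝ) (dd : Fin m → ℝ)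
      (w : Fin m → ℝ) (w0' : ℝ),
      ∀ x : Fin d → ℝ,
        F x = sgn (w0' + ∑ j, w j * sgn ((∑ i, v j i * x i) + dd j)) := by
  rintro ⟨m, hm, v, dd, w, w0', hnet⟩
  have hcomputes : reluThreshold (univ.map (Fin.castLEEmb hd)) = thresholdNet v dd w w0' :=
    funext fun x => by rw [reluThreshold, sum_map, thresholdNet]; exact (hF x).symm.trans (hnet x)
  have hbound := two_pow_card_sub_one_le_card hcomputes
  rw [card_map, card_univ, Fintype.card_fin, Fintype.card_fin] at hbound
  have := Nat.one_lt_two_pow (n := n) (by omega)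
  omega
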